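/- arXiv:2009.06038 — 2 statements merged into one kernel-verified Lean document; each statement's English description precedes it below -/
import Mathlib

section
/- Let ρ be a symmetric operator on an n-dimensional real inner product space with trace S, and Ein_k = S·id − k·ρ. If k < l < 0 and Ein_k is positive definite, then Ein_l is positive definite and S > 0. -/
/-!
Summing the positive quadratic form of `Ein_k` over an orthonormal basis gives
`trace Ein_k = (n - k) S > 0`, hence `S > 0`. For `k < l < 0`, `Ein_l` is then the combination
`(l / k) Ein_k + (1 - l / k) S id` with nonnegative coefficients, the second one positive.
-/

open RealInnerProductSpace

namespace LinearMap

variable {E : Type*} [NormedAddCommGroup E] [InnerProductSpace ℝ E]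

theorem trace_pos_of_inner_pos [FiniteDimensional ℝ E] [Nontrivial E] {T : E →ₗ[ℝ] E}
    (hT : ∀ v : E, v ≠ 0 → 0 < ⟪T v, v⟫) : 0 < trace ℝ E T := by
  let b := stdOrthonormalBasis ℝ E
  have : Nonempty (Fin (Module.finrank ℝ E)) := ⟨⟨0, Module.finrank_pos⟩⟩
  rw [trace_eq_sum_inner T b]
  exact Finset.sum_pos (fun i _ => real_inner_comm (T (b i)) (b i) ▸ hT _ (b.toBasis.ne_zero i))
    Finset.univ_nonempty

theorem trace_smul_id_sub_smul [FiniteDimensional ℝ E] (S c : ℝ) (ρ : E →ₗ[ℝ] E) :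
    trace ℝ E (S • (id : E →ₗ[ℝ] E) - c • ρ) =
      S * Module.finrank ℝ E - c * trace ℝ E ρ := by
  simp [trace_id]

theorem inner_smul_id_sub_smul_apply (S c : ℝ) (ρ : E →ₗ[ℝ] E) (v : E) :
    ⟪(S • (id : E →ₗ[ℝ] E) - c • ρ) v, v⟫ = S * ⟪v, v⟫ - c * ⟪ρ v, v⟫ := by
  simp [inner_sub_left, real_inner_smul_left]

end LinearMap

open LinearMap

theorem sub_mul_pos_of_sub_mul_pos {S a r k l : ℝ} (hS : 0 < S) (ha : 0 < a) (hkl : k < l)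
    (hl : l ≤ 0) (hk : 0 < S * a - k * r) : 0 < S * a - l * r := by
  have hk0 : k < 0 := hkl.trans_le hl
  have key : k * (S * a - l * r) = l * (S * a - k * r) + (k - l) * (S * a) := by ring
  have : k * (S * a - l * r) < 0 := by
    rw [key]
    nlinarith [mul_nonpos_of_nonpos_of_nonneg hl hk.le, mul_pos hS ha]
  exact pos_of_mul_neg_right this hk0.le

theorem stmt_1_general {E : Type*} [NormedAddCommGroup E] [InnerProductSpace ℝ E]
    [FiniteDimensional ℝ E] {n : ℕ} (hn : Module.finrank ℝ E = n) (hn1 : 1 ≤ n)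
    (ρ : E →ₗ[ℝ] E) (S : ℝ) (hS : S = LinearMap.trace ℝ E ρ)
    {k l : ℝ} (hkl : k < l) (hl : l < 0)
    (hposk : ∀ v : E, v ≠ 0 →
      0 < ⟪(S • (LinearMap.id : E →ₗ[ℝ] E) - k • ρ) v, v⟫) :
    (∀ v : E, v ≠ 0 →
      0 < ⟪(S • (LinearMap.id : E →ₗ[ℝ] E) - l • ρ) v, v⟫) ∧ 0 < S := by
  have : Nontrivial E := Module.finrank_pos_iff.mp (hn ▸ hn1)
  have hSpos : 0 < S := by
    have htr := trace_pos_of_inner_pos hposk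
    rw [trace_smul_id_sub_smul, ← hS, hn] at htr
    have : (1 : ℝ) ≤ n := by exact_mod_cast hn1
    nlinarith
  refine ⟨fun v hv => ?_, hSpos⟩
  have hk := hposk v hv
  rw [inner_smul_id_sub_smul_apply] at hk ⊢
  exact sub_mul_pos_of_sub_mul_pos hSpos (real_inner_self_pos.mpr hv) hkl hl.le hk

/-- If `k < l < 0` and `Ein_k = S•id - k•ρ` is positive definite,
then `Ein_l` is positive definite and `S > 0`. -/
theorem stmt_1 {E : Type*} [NormedAddCommGroup E] [InnerProductSpace ℝ E]
    [FiniteDimensional ℝ E] {n : ℕ} (hn : Module.finrank ℝ E = n) (hn1 : 1 ≤ n)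
    (ρ : E →ₗ[ℝ] E) (hρ : ρ.IsSymmetric) (S : ℝ) (hS : S = LinearMap.trace ℝ E ρ)
    {k l : ℝ} (hkl : k < l) (hl : l < 0)
    (hposk : ∀ v : E, v ≠ 0 →
      0 < ⟪(S • (LinearMap.id : E →ₗ[ℝ] E) - k • ρ) v, v⟫) :
    (∀ v : E, v ≠ 0 →
      0 < ⟪(S • (LinearMap.id : E →ₗ[ℝ] E) - l • ρ) v, v⟫) ∧ 0 < S :=
  stmt_1_general hn hn1 ρ S hS hkl hl hposk
end

section
/- Let ρ be a symmetric operator on an n-dimensional real inner product space with trace S, and let 1 ≤ k < n. If Sch_{(k−1)/(k(n−1))} := ρ − ((k−1)/(k(n−1)))·S·id is positive definite, then Ein_k = S·id − k·ρ is positive definite. -/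
open RealInnerProductSpace

/-!
If `u` is a unit vector, completing it to an orthonormal basis `u = e₁, …, eₙ` writes
`tr A - ⟪A u, u⟫ = ∑_{i ≥ 2} ⟪A eᵢ, eᵢ⟫`, which is positive when `A` is positive definite and
`n ≥ 2`; so the first Newton transformation `t₁(A) = tr(A)·id - A` of a positive definite map is
positive definite. With `c = (k - 1)/(k(n - 1))` one has `tr(ρ - cS·id) = (1 - cn)S` and
`1 - c(n - 1) = 1/k`, whence `k·t₁(ρ - cS·id) = S·id - kρ`.
-/

namespace LinearMap

variable {E : Type*} [NormedAddCommGroup E] [InnerProductSpace ℝ E]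

noncomputable def firstNewtonTransform (A : E →ₗ[ℝ] E) : E →ₗ[ℝ] E :=
  LinearMap.trace ℝ E A • LinearMap.id - A

theorem inner_firstNewtonTransform_apply_self (A : E →ₗ[ℝ] E) (v : E) :
    ⟪A.firstNewtonTransform v, v⟫ = LinearMap.trace ℝ E A * ‖v‖ ^ 2 - ⟪A v, v⟫ := by
  simp only [firstNewtonTransform, sub_apply, smul_apply, id_apply, inner_sub_left,
    real_inner_smul_left, real_inner_self_eq_norm_sq]

theorem inner_apply_self_lt_trace_of_norm_eq_one [FiniteDimensional ℝ E]
    (hE : 2 ≤ Module.finrank ℝ E) {A : E →ₗ[ℝ] E} (hA : ∀ v : E, v ≠ 0 → 0 < ⟪A v, v⟫)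
    {u : E} (hu : ‖u‖ = 1) :
    ⟪A u, u⟫ < LinearMap.trace ℝ E A := by
  set n := Module.finrank ℝ E
  have : NeZero n := ⟨by omega⟩
  have hu₀ : Orthonormal ℝ (({0} : Set (Fin n)).domRestrict fun _ ↦ u) :=
    orthonormal_subsingleton_iff.mpr fun _ ↦ hu
  obtain ⟨b, hb⟩ := hu₀.exists_orthonormalBasis_extension_of_card_eq (by simp [n])
  have hb₁ : (⟨1, by omega⟩ : Fin n) ∈ Finset.univ.erase 0 := by simp [Fin.ext_iff]
  have hrest : 0 < ∑ i ∈ Finset.univ.erase 0, ⟪A (b i), b i⟫ :=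
    Finset.sum_pos (fun i _ ↦ hA _ (b.toBasis.ne_zero i)) ⟨_, hb₁⟩
  calc ⟪A u, u⟫ < ⟪A u, u⟫ + ∑ i ∈ Finset.univ.erase 0, ⟪A (b i), b i⟫ := by linarith
    _ = LinearMap.trace ℝ E A := by
      rw [trace_eq_sum_inner A b, ← Finset.add_sum_erase _ _ (Finset.mem_univ 0), hb 0 rfl]
      simp only [real_inner_comm (A _)]

theorem inner_firstNewtonTransform_apply_self_pos [FiniteDimensional ℝ E]
    (hE : 2 ≤ Module.finrank ℝ E) {A : E →ₗ[ℝ] E} (hA : ∀ v : E, v ≠ 0 → 0 < ⟪A v, v⟫)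
    (v : E) (hv : v ≠ 0) :
    0 < ⟪A.firstNewtonTransform v, v⟫ := by
  have hv₀ : 0 < ‖v‖ := norm_pos_iff.mpr hv
  have hunit := inner_apply_self_lt_trace_of_norm_eq_one hE hA (norm_smul_inv_norm (𝕜 := ℝ) hv)
  rw [map_smul, real_inner_smul_left, real_inner_smul_right] at hunit
  rw [inner_firstNewtonTransform_apply_self, sub_pos]
  calc ⟪A v, v⟫ = ‖v‖ ^ 2 * (‖v‖⁻¹ * (‖v‖⁻¹ * ⟪A v, v⟫)) := by field_simp
    _ < ‖v‖ ^ 2 * LinearMap.trace ℝ E A := by gcongr; exact hunit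
    _ = _ := mul_comm _ _

theorem smul_firstNewtonTransform_sub_trace_smul_id [FiniteDimensional ℝ E] (ρ : E →ₗ[ℝ] E)
    {k : ℝ} (hk : k ≠ 0) (hE : Module.finrank ℝ E ≠ 1) :
    k • (ρ - ((k - 1) / (k * ((Module.finrank ℝ E : ℝ) - 1)) * LinearMap.trace ℝ E ρ) •
        LinearMap.id).firstNewtonTransform =
      LinearMap.trace ℝ E ρ • LinearMap.id - k • ρ := by
  have hE' : (Module.finrank ℝ E : ℝ) - 1 ≠ 0 := sub_ne_zero.mpr (mod_cast hE)
  have hcoeff : k * (1 - (k - 1) / (k * ((Module.finrank ℝ E : ℝ) - 1)) *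
      ((Module.finrank ℝ E : ℝ) - 1)) = 1 := by
    field_simp
    ring
  ext v
  simp only [firstNewtonTransform, map_sub, map_smul, trace_id, smul_apply, sub_apply, id_apply,
    smul_eq_mul]
  linear_combination (norm := module) (LinearMap.trace ℝ E ρ) • hcoeff • v

end LinearMap

theorem stmt_15_general {E : Type*} [NormedAddCommGroup E] [InnerProductSpace ℝ E]
    [FiniteDimensional ℝ E] {n : ℕ} (hn : Module.finrank ℝ E = n) (hn2 : 2 ≤ n)
    (ρ : E →ₗ[ℝ] E) (S : ℝ) (hS : S = LinearMap.trace ℝ E ρ)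
    {k : ℝ} (hk1 : 1 ≤ k)
    (hpos : ∀ v : E, v ≠ 0 →
      0 < ⟪(ρ - ((k - 1) / (k * ((n : ℝ) - 1)) * S) •
        (LinearMap.id : E →ₗ[ℝ] E)) v, v⟫) :
    ∀ v : E, v ≠ 0 →
      0 < ⟪(S • (LinearMap.id : E →ₗ[ℝ] E) - k • ρ) v, v⟫ := by
  intro v hv
  subst hn hS
  have hk : 0 < k := by linarith
  rw [← ρ.smul_firstNewtonTransform_sub_trace_smul_id hk.ne' (by omega), LinearMap.smul_apply,
    real_inner_smul_left]
  exact mul_pos hk (LinearMap.inner_firstNewtonTransform_apply_self_pos hn2 hpos v hv)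

/-- For `1 ≤ k < n` (`n ≥ 2`), if
`Sch_{(k-1)/(k(n-1))} = ρ - ((k-1)/(k(n-1)))·S•id` is positive definite then
`Ein_k = S•id - k•ρ` is positive definite. -/
theorem stmt_15 {E : Type*} [NormedAddCommGroup E] [InnerProductSpace ℝ E]
    [FiniteDimensional ℝ E] {n : ℕ} (hn : Module.finrank ℝ E = n) (hn2 : 2 ≤ n)
    (ρ : E →ₗ[ℝ] E) (hρ : ρ.IsSymmetric) (S : ℝ) (hS : S = LinearMap.trace ℝ E ρ)
    {k : ℝ} (hk1 : 1 ≤ k) (hk2 : k < n)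
    (hpos : ∀ v : E, v ≠ 0 →
      0 < ⟪(ρ - ((k - 1) / (k * ((n : ℝ) - 1)) * S) •
        (LinearMap.id : E →ₗ[ℝ] E)) v, v⟫) :
    ∀ v : E, v ≠ 0 →
      0 < ⟪(S • (LinearMap.id : E →ₗ[ℝ] E) - k • ρ) v, v⟫ :=
  stmt_15_general hn hn2 ρ S hS hk1 hpos
end
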